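/- Let t be an ordered labeled tree, let v1 be a non-root node of t with parent p, and let v2 be any node of t. Then pos'(v̄1) < pos'(v2) if and only if there exists a node u of t with depth(u) ≤ depth(v1) − 1 and pos(v1) < pos(u) ≤ pos(v2); equivalently, if and only if pos(v1) < pos(v2) and v2 does not lie in the subtree of p in t. -/

import Mathlib

/-- Ordered labeled trees (rose trees). -/
inductive RTree (α : Type) : Type
  | node : α → List (RTree α) → RTree α

/-- Extended binary trees: every node has an optional left and right child. -/
inductive BTree (α : Type) : Type
  | nil : BTree α
  | node : α → BTree α → BTree α → BTree α

namespace BTree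

/-- Tag sequence of an extended binary tree: opening tag, left subtree,
right subtree, closing tag.  `false` = opening tag, `true` = closing tag. -/
def btags {α : Type} : BTree α → List (α × Bool)
  | .nil => []
  | .node a l r => (a, false) :: (btags l ++ btags r ++ [(a, true)])

end BTree

namespace RTree

variable {α : Type}

def label : RTree α → α
  | .node a _ => a

def childLabels : RTree α → List α
  | .node _ cs => cs.map label

mutual
/-- Number of nodes of a tree. -/
def size : RTree α → ℕ
  | .node _ cs => 1 + sizeL cs
def sizeL : List (RTree α) → ℕ
  | [] => 0
  | c :: cs => size c + sizeL cs
end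

mutual
/-- `XML(t)`: the tag sequence of a depth-first traversal;
`(a, false)` is an opening tag, `(a, true)` a closing tag. -/
def xml : RTree α → List (α × Bool)
  | .node a cs => (a, false) :: (xmlL cs ++ [(a, true)])
def xmlL : List (RTree α) → List (α × Bool)
  | [] => []
  | c :: cs => xml c ++ xmlL cs
end

mutual
/-- XML tag sequence where each node is identified by its path
(list of child indices from the root). -/
def ptags : RTree α → List ℕ → List (List ℕ × Bool)
  | .node _ cs, p => (p, false) :: (ptagsL cs p 0 ++ [(p, true)])
def ptagsL : List (RTree α) → List ℕ → ℕ → List (List ℕ × Bool)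
  | [], _, _ => []
  | c :: cs, p, i => ptags c (p ++ [i]) ++ ptagsL cs p (i + 1)
end

/-- `XML(t)`, with nodes identified by their paths. -/
def tagList (t : RTree α) : List (List ℕ × Bool) := ptags t []

/-- `pos(v)`: (1-indexed) position of the opening tag of node `v` in `XML(t)`. -/
def posOpen (t : RTree α) (v : List ℕ) : ℕ := (tagList t).idxOf (v, false) + 1

/-- `pos(v̄)`: (1-indexed) position of the closing tag of node `v` in `XML(t)`. -/
def posClose (t : RTree α) (v : List ℕ) : ℕ := (tagList t).idxOf (v, true) + 1

/-- Subtree of `t` rooted at the node with path `p` (if any). -/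
def subtreeAt : RTree α → List ℕ → Option (RTree α)
  | t, [] => some t
  | .node _ cs, i :: p =>
    match cs[i]? with
    | some c => subtreeAt c p
    | none => none

/-- `p` is (the path of) a node of `t`. -/
def IsNode (t : RTree α) (p : List ℕ) : Prop := (subtreeAt t p).isSome

/-- First-child next-sibling encoding of a forest. -/
def fcnsL : List (RTree α) → BTree α
  | [] => .nil
  | .node a cs :: ts => .node a (fcnsL cs) (fcnsL ts)

/-- First-child next-sibling encoding `FCNS(t)`. -/
def fcns (t : RTree α) : BTree α := fcnsL [t]

/-- FCNS encoding of a forest, nodes identified by their paths in the original tree;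
`p` is the path of the parent, `i` the index of the first tree of the forest. -/
def pfcnsL : List (RTree α) → List ℕ → ℕ → BTree (List ℕ)
  | [], _, _ => .nil
  | .node _ cs :: ts, p, i =>
      .node (p ++ [i]) (pfcnsL cs (p ++ [i]) 0) (pfcnsL ts p (i + 1))

/-- `FCNS(t)`, with nodes identified by their paths in `t`. -/
def pfcns : RTree α → BTree (List ℕ)
  | .node _ cs => .node [] (pfcnsL cs [] 0) .nil

/-- `XML(FCNS(t))`, with nodes identified by their paths in `t`. -/
def btagList (t : RTree α) : List (List ℕ × Bool) := (pfcns t).btags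

/-- `pos'(v)`: position of the opening tag of `v` in `XML(FCNS(t))`. -/
def posOpen' (t : RTree α) (v : List ℕ) : ℕ := (btagList t).idxOf (v, false) + 1

/-- `pos'(v̄)`: position of the closing tag of `v` in `XML(FCNS(t))`. -/
def posClose' (t : RTree α) (v : List ℕ) : ℕ := (btagList t).idxOf (v, true) + 1

/-- A tree is valid against a DTD `D` if for every node, the word of labels of
its children belongs to `D` applied to the node's label. -/
def Valid (D : α → List α → Prop) (t : RTree α) : Prop :=
  ∀ p st, subtreeAt t p = some st → D st.label st.childLabels

end RTree

/-- `w` is a later sibling of `v` (as paths): same parent, larger last index. -/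
def LaterSib (w v : List ℕ) : Prop := ∃ q i j, v = q ++ [i] ∧ w = q ++ [j] ∧ i < j

/-!
Both tag sequences are strictly sorted by a lexicographic key on paths, taking values in
`List (WithTop ℤ)`. In `XML(t)` the opening tag of `v` has key `v` and the closing tag key
`v ++ [⊤]`, so `pos` compares nodes lexicographically. In `XML(FCNS(t))` the opening tags come in
the same order, but the closing tag of `q ++ [i]` is emitted only after the subtrees of all later
siblings `q ++ [j]`, `j > i`, and after their closing tags: its key is `q ++ [⊤, -i]`. Hence
`pos'(v̄₁) < pos'(v₂)` iff `q ++ [⊤] < v₂` for the parent `q` of `v₁`, i.e. iff `q < v₂` and `v₂` is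
not a descendant of `q`. The node `u` of the first characterisation is the ancestor of `v₂` at the
depth of `q`.
-/

namespace List

variable {α : Type*}

theorem Pairwise.idxOf_lt_idxOf_iff [BEq α] [LawfulBEq α] {R : α → α → Prop} {l : List α}
    (hl : l.Pairwise R) (hR : ∀ a b, R a b → ¬ R b a) {a b : α} (ha : a ∈ l) (hb : b ∈ l) :
    l.idxOf a < l.idxOf b ↔ R a b := by
  have before {x y : α} (hx : x ∈ l) (hy : y ∈ l) (hxy : l.idxOf x < l.idxOf y) : R x y := by
    have hx' := idxOf_lt_length_iff.2 hx
    have hy' := idxOf_lt_length_iff.2 hy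
    simpa only [getElem_idxOf] using pairwise_iff_getElem.1 hl _ _ hx' hy' hxy
  refine ⟨before ha hb, fun hab => ?_⟩
  rcases lt_trichotomy (l.idxOf a) (l.idxOf b) with h | h | h
  · exact h
  · obtain rfl := (idxOf_inj ha).1 h
    exact absurd hab (hR a a hab)
  · exact absurd (before hb ha h) (hR a b hab)

structure SortedIco {β : Type*} [Preorder β] (key : α → β) (lo hi : β) (l : List α) : Prop where
  le : lo ≤ hi
  mem : ∀ x ∈ l, key x ∈ Set.Ico lo hi
  pairwise : l.Pairwise (key · < key ·)

namespace SortedIco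

variable {β : Type*} [Preorder β] {key : α → β} {a b c : β}

theorem nil (h : a ≤ b) : SortedIco key a b [] := ⟨h, by simp, .nil⟩

theorem singleton {x : α} (h : key x ∈ Set.Ico a b) : SortedIco key a b [x] :=
  ⟨h.1.trans h.2.le, by simpa using h, pairwise_singleton _ _⟩

theorem append {l₁ l₂ : List α} (h₁ : SortedIco key a b l₁) (h₂ : SortedIco key b c l₂) :
    SortedIco key a c (l₁ ++ l₂) := by
  refine ⟨h₁.le.trans h₂.le, fun x hx => ?_, pairwise_append.2 ⟨h₁.pairwise, h₂.pairwise,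
    fun x hx y hy => (h₁.mem x hx).2.trans_le (h₂.mem y hy).1⟩⟩
  rcases mem_append.1 hx with hx | hx
  · exact ⟨(h₁.mem x hx).1, (h₁.mem x hx).2.trans_le h₂.le⟩
  · exact ⟨h₁.le.trans (h₂.mem x hx).1, (h₂.mem x hx).2⟩

theorem mono_right {l : List α} (h : SortedIco key a b l) (hbc : b ≤ c) : SortedIco key a c l :=
  append_nil l ▸ h.append (nil hbc)

end SortedIco

theorem lt_append_cons [LT α] (l : List α) (a : α) (m : List α) : l < l ++ a :: m := by
  simpa using append_left_lt (l₁ := l) (nil_lt_cons a m)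

theorem append_cons_lt_append_cons [LT α] (l : List α) {a b : α} (h : a < b) (m n : List α) :
    l ++ a :: m < l ++ b :: n :=
  append_left_lt (cons_lt_cons_iff.2 (Or.inl h))

theorem append_lt_take_length [LinearOrder α] {a b : List α} (hab : a < b) (hnp : ¬ a <+: b)
    (r : List α) : a ++ r < b.take a.length := by
  induction a generalizing b with
  | nil => exact absurd nil_prefix hnp
  | cons x a ih =>
    cases b with
    | nil => exact absurd hab (not_lt_nil _)
    | cons y b =>
      rw [cons_lt_cons_iff] at hab
      simp only [cons_append, length_cons, take_succ_cons, cons_lt_cons_iff]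
      rcases hab with hxy | ⟨rfl, hab⟩
      · exact Or.inl hxy
      · exact Or.inr ⟨rfl, ih hab (fun h => hnp (cons_prefix_cons.2 ⟨rfl, h⟩))⟩

end List

namespace RTree

open List

variable {α : Type}

def openKey (v : List ℕ) : List (WithTop ℤ) := v.map fun n : ℕ => ((n : ℤ) : WithTop ℤ)

def xmlKey : List ℕ × Bool → List (WithTop ℤ)
  | (v, false) => openKey v
  | (v, true) => openKey v ++ [⊤]

/-- Only meaningful for non-root nodes: the root's closing tag gets the key of the closing tag
of its first child. -/
def fcnsKey : List ℕ × Bool → List (WithTop ℤ)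
  | (v, false) => openKey v
  | (v, true) => openKey v.dropLast ++ [⊤, ((-(v.getLastD 0 : ℤ) : ℤ) : WithTop ℤ)]

@[simp] theorem openKey_nil : openKey [] = [] := rfl

@[simp] theorem openKey_cons (n : ℕ) (v : List ℕ) :
    openKey (n :: v) = ((n : ℤ) : WithTop ℤ) :: openKey v := rfl

@[simp] theorem openKey_append (v w : List ℕ) : openKey (v ++ w) = openKey v ++ openKey w :=
  map_append ..

theorem openKey_lt_openKey {v w : List ℕ} : openKey v < openKey w ↔ v < w := by
  have mono : ∀ x y : ℕ, x < y → ((x : ℤ) : WithTop ℤ) < ((y : ℤ) : WithTop ℤ) := by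
    intro x y h
    exact_mod_cast h
  refine ⟨fun h => ?_, List.map_lt mono⟩
  by_contra hvw
  exact List.map_le mono (List.not_lt.1 hvw) h

theorem openKey_le_openKey {v w : List ℕ} : openKey v ≤ openKey w ↔ v ≤ w := by
  rw [← not_lt, openKey_lt_openKey, not_lt]

theorem openKey_append_top_lt_iff {q w : List ℕ} (r : List (WithTop ℤ)) :
    openKey q ++ ⊤ :: r < openKey w ↔ q < w ∧ ¬ q <+: w := by
  induction q generalizing w with
  | nil => cases w <;> simp [List.cons_lt_cons_iff]
  | cons x q ih =>
    cases w with
    | nil => simp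
    | cons y w =>
      simp only [openKey_cons, cons_append, List.cons_lt_cons_iff, ih, cons_prefix_cons,
        WithTop.coe_lt_coe, WithTop.coe_inj, Nat.cast_lt, Nat.cast_inj]
      grind

theorem isNode_nil (t : RTree α) : IsNode t [] := by
  simp [IsNode, subtreeAt]

theorem isNode_node_cons {a : α} {cs : List (RTree α)} {j : ℕ} {s : List ℕ} :
    IsNode (node a cs) (j :: s) ↔ ∃ c, cs[j]? = some c ∧ IsNode c s := by
  rw [IsNode, subtreeAt]
  cases cs[j]? <;> simp [IsNode]

theorem IsNode.of_prefix {t : RTree α} {u w : List ℕ} (hw : IsNode t w) (h : u <+: w) :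
    IsNode t u := by
  induction u generalizing t w with
  | nil => exact isNode_nil t
  | cons j u ih =>
    obtain ⟨r, rfl⟩ := h
    obtain ⟨a, cs⟩ := t
    obtain ⟨c, hc, hs⟩ := isNode_node_cons.1 hw
    exact isNode_node_cons.2 ⟨c, hc, ih hs (prefix_append u r)⟩

theorem mem_ptagsL (cs : List (RTree α)) (p : List ℕ) (i : ℕ) {j : ℕ} {c : RTree α}
    {s : List ℕ} (hc : cs[j]? = some c) (hs : IsNode c s) (b : Bool) :
    (p ++ (i + j) :: s, b) ∈ ptagsL cs p i := by
  induction cs, p, i using pfcnsL.induct generalizing j c s with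
  | case1 => simp at hc
  | case2 a cs ts p i ihc iht =>
    cases j with
    | zero =>
      obtain rfl : node a cs = c := by simpa using hc
      cases s with
      | nil => cases b <;> simp [ptagsL, ptags]
      | cons k s =>
        obtain ⟨c', hc', hs'⟩ := isNode_node_cons.1 hs
        simpa [ptagsL, ptags] using Or.inl (ihc hc' hs')
    | succ j =>
      rw [← add_assoc, add_right_comm]
      simpa [ptagsL] using Or.inr (iht (j := j) (by simpa using hc) hs)

theorem mem_ptagsL_of_isNode {a : α} {cs : List (RTree α)} {j : ℕ} {s : List ℕ}
    (h : IsNode (node a cs) (j :: s)) (b : Bool) : (j :: s, b) ∈ ptagsL cs [] 0 := by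
  obtain ⟨c, hc, hs⟩ := isNode_node_cons.1 h
  simpa using mem_ptagsL cs [] 0 hc hs b

theorem mem_tagList {t : RTree α} {v : List ℕ} (hv : IsNode t v) (b : Bool) :
    (v, b) ∈ tagList t := by
  obtain ⟨a, cs⟩ := t
  cases v with
  | nil => cases b <;> simp [tagList, ptags]
  | cons j s => simp [tagList, ptags, mem_ptagsL_of_isNode hv b]

theorem btags_pfcnsL_perm (cs : List (RTree α)) (p : List ℕ) (i : ℕ) :
    (pfcnsL cs p i).btags ~ ptagsL cs p i := by
  induction cs, p, i using pfcnsL.induct with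
  | case1 => simp [pfcnsL, BTree.btags, ptagsL]
  | case2 a cs ts p i ihc iht =>
    simp only [pfcnsL, BTree.btags, ptagsL, ptags, cons_append, perm_cons, append_assoc]
    exact ihc.append ((iht.append_right _).trans perm_append_comm)

theorem mem_btags_pfcnsL {a : α} {cs : List (RTree α)} {v : List ℕ}
    (hv : IsNode (node a cs) v) (hv0 : v ≠ []) (b : Bool) : (v, b) ∈ (pfcnsL cs [] 0).btags := by
  obtain ⟨j, s, rfl⟩ := exists_cons_of_ne_nil hv0
  exact (btags_pfcnsL_perm cs [] 0).mem_iff.2 (mem_ptagsL_of_isNode hv b)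

theorem sortedIco_ptagsL (cs : List (RTree α)) (p : List ℕ) (i : ℕ) :
    SortedIco xmlKey (openKey (p ++ [i])) (openKey p ++ [⊤]) (ptagsL cs p i) := by
  induction cs, p, i using pfcnsL.induct with
  | case1 p i =>
    exact .nil (by simpa using (append_cons_lt_append_cons _ (WithTop.coe_lt_top _) _ _).le)
  | case2 a cs ts p i ihc iht =>
    have hopen : xmlKey (p ++ [i], false) ∈
        Set.Ico (openKey (p ++ [i])) (openKey (p ++ [i] ++ [0])) :=
      ⟨le_rfl, by simpa [xmlKey] using lt_append_cons (openKey (p ++ [i])) 0 []⟩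
    have hclose : xmlKey (p ++ [i], true) ∈
        Set.Ico (openKey (p ++ [i]) ++ [⊤]) (openKey (p ++ [i + 1])) := by
      refine ⟨le_rfl, ?_⟩
      simpa [xmlKey] using append_cons_lt_append_cons (openKey p)
        (WithTop.coe_lt_coe.2 (by omega : (i : ℤ) < (i + 1 : ℕ))) [⊤] []
    exact (SortedIco.singleton hopen).append ((ihc.append (.singleton hclose)).append iht)

theorem sortedIco_btags_pfcnsL (cs : List (RTree α)) (p : List ℕ) (i : ℕ) :
    SortedIco fcnsKey (openKey (p ++ [i])) (openKey p ++ [⊤, ((1 - i : ℤ) : WithTop ℤ)])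
      (pfcnsL cs p i).btags := by
  induction cs, p, i using pfcnsL.induct with
  | case1 p i =>
    rw [pfcnsL, BTree.btags]
    refine .nil ?_
    rw [openKey_append]
    exact (append_cons_lt_append_cons (openKey p) (WithTop.coe_lt_top (i : ℤ)) [] _).le
  | case2 a cs ts p i ihc iht =>
    have hopen : fcnsKey (p ++ [i], false) ∈
        Set.Ico (openKey (p ++ [i])) (openKey (p ++ [i] ++ [0])) :=
      ⟨le_rfl, by simpa [fcnsKey] using lt_append_cons (openKey (p ++ [i])) 0 []⟩
    have hchildren : openKey (p ++ [i]) ++ [⊤, ((1 - (0 : ℕ) : ℤ) : WithTop ℤ)] ≤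
        openKey (p ++ [i + 1]) := by
      simpa using (append_cons_lt_append_cons (openKey p)
        (WithTop.coe_lt_coe.2 (by omega : (i : ℤ) < (i + 1 : ℕ))) [⊤, 1] []).le
    have hsiblings : (1 - ((i + 1 : ℕ) : ℤ)) = -i := by push_cast; ring
    rw [hsiblings] at iht
    have hclose : fcnsKey (p ++ [i], true) ∈ Set.Ico (openKey p ++ [⊤, ((-i : ℤ) : WithTop ℤ)])
        (openKey p ++ [⊤, ((1 - i : ℤ) : WithTop ℤ)]) := by
      refine ⟨by simp [fcnsKey], ?_⟩
      have := append_cons_lt_append_cons (openKey p ++ [⊤])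
        (WithTop.coe_lt_coe.2 (by omega : -(i : ℤ) < 1 - i)) [] []
      simp only [append_assoc, singleton_append] at this
      simpa [fcnsKey] using this
    rw [pfcnsL, BTree.btags]
    exact (SortedIco.singleton hopen).append
      (((ihc.mono_right hchildren).append iht).append (.singleton hclose))

theorem pairwise_tagList (t : RTree α) : (tagList t).Pairwise (xmlKey · < xmlKey ·) := by
  obtain ⟨a, cs⟩ := t
  have hopen : xmlKey ([], false) ∈ Set.Ico (openKey []) (openKey ([] ++ [0])) :=
    ⟨le_rfl, nil_lt_cons _ _⟩
  have hclose : xmlKey ([], true) ∈ Set.Ico (openKey [] ++ [⊤]) [⊤, ⊤] :=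
    ⟨le_rfl, lt_append_cons [⊤] ⊤ []⟩
  exact ((SortedIco.singleton hopen).append
    ((sortedIco_ptagsL cs [] 0).append (.singleton hclose))).pairwise

theorem posOpen_lt_posOpen_iff {t : RTree α} {v w : List ℕ} (hv : IsNode t v)
    (hw : IsNode t w) : posOpen t v < posOpen t w ↔ v < w := by
  rw [posOpen, posOpen, Nat.add_lt_add_iff_right, (pairwise_tagList t).idxOf_lt_idxOf_iff
    (fun _ _ => lt_asymm) (mem_tagList hv false) (mem_tagList hw false)]
  exact openKey_lt_openKey

theorem posOpen_le_posOpen_iff {t : RTree α} {v w : List ℕ} (hv : IsNode t v)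
    (hw : IsNode t w) : posOpen t v ≤ posOpen t w ↔ v ≤ w := by
  rw [← not_lt, posOpen_lt_posOpen_iff hw hv, not_lt]

theorem posClose'_lt_posOpen'_iff_fcnsKey {t : RTree α} {v w : List ℕ} (hv : IsNode t v)
    (hw : IsNode t w) (hv0 : v ≠ []) :
    posClose' t v < posOpen' t w ↔ fcnsKey (v, true) < openKey w := by
  obtain ⟨a, cs⟩ := t
  have hB := (sortedIco_btags_pfcnsL cs [] 0).pairwise
  rw [posClose', posOpen', Nat.add_lt_add_iff_right, btagList, pfcns, BTree.btags, BTree.btags,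
    append_nil, idxOf_cons_ne _ (by simp)]
  rcases eq_or_ne w [] with rfl | hw0
  · simp
  · rw [idxOf_cons_ne _ (by simpa using hw0.symm), Nat.succ_lt_succ_iff,
      idxOf_append_of_mem (mem_btags_pfcnsL hv hv0 true),
      idxOf_append_of_mem (mem_btags_pfcnsL hw hw0 false),
      hB.idxOf_lt_idxOf_iff (fun _ _ => lt_asymm) (mem_btags_pfcnsL hv hv0 true)
        (mem_btags_pfcnsL hw hw0 false)]
    rfl

theorem posClose'_append_lt_posOpen'_iff {t : RTree α} {q w : List ℕ} {i : ℕ}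
    (hv : IsNode t (q ++ [i])) (hw : IsNode t w) :
    posClose' t (q ++ [i]) < posOpen' t w ↔ q < w ∧ ¬ q <+: w := by
  rw [posClose'_lt_posOpen'_iff_fcnsKey hv hw (by simp),
    ← openKey_append_top_lt_iff [((-i : ℤ) : WithTop ℤ)]]
  simp [fcnsKey]

theorem exists_node_between_iff {t : RTree α} {q w : List ℕ} {i : ℕ}
    (hv : IsNode t (q ++ [i])) (hw : IsNode t w) :
    (∃ u, IsNode t u ∧ u.length + 1 ≤ (q ++ [i]).length ∧
      posOpen t (q ++ [i]) < posOpen t u ∧ posOpen t u ≤ posOpen t w) ↔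
      q < w ∧ ¬ q <+: w := by
  constructor
  · rintro ⟨u, hu, hlen, hvu, huw⟩
    rw [posOpen_lt_posOpen_iff hv hu] at hvu
    rw [posOpen_le_posOpen_iff hu hw] at huw
    have hqu : q < u := (lt_append_cons q i []).trans hvu
    have hnp : ¬ q <+: u := fun h => by
      obtain rfl := h.eq_of_length_le (by simpa using hlen)
      exact lt_asymm hvu (lt_append_cons q i [])
    have hkey := (openKey_append_top_lt_iff []).2 ⟨hqu, hnp⟩
    exact (openKey_append_top_lt_iff []).1 (hkey.trans_le (openKey_le_openKey.2 huw))
  · rintro ⟨hqw, hnp⟩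
    have hu := hw.of_prefix (take_prefix q.length w)
    refine ⟨w.take q.length, hu, by simp, ?_, ?_⟩
    · rw [posOpen_lt_posOpen_iff hv hu]
      exact append_lt_take_length hqw hnp [i]
    · rw [posOpen_le_posOpen_iff hu hw]
      exact not_lt.1 (take_prefix _ _).le

end RTree

/-- For a non-root node `v₁` of `t` with parent `p` and any node
`v₂` of `t`: `pos'(v̄₁) < pos'(v₂)` iff there is a node `u` of `t` with
`depth(u) ≤ depth(v₁) − 1` and `pos(v₁) < pos(u) ≤ pos(v₂)`; equivalently, iff
`pos(v₁) < pos(v₂)` and `v₂` does not lie in the subtree of `p` in `t`. -/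
theorem posClose'_lt_posOpen'_iff {α : Type} (t : RTree α) (v₁ v₂ : List ℕ)
    (h₁ : RTree.IsNode t v₁) (h₂ : RTree.IsNode t v₂) (hroot : v₁ ≠ []) :
    (RTree.posClose' t v₁ < RTree.posOpen' t v₂ ↔
      ∃ u, RTree.IsNode t u ∧ u.length + 1 ≤ v₁.length ∧
        RTree.posOpen t v₁ < RTree.posOpen t u ∧
        RTree.posOpen t u ≤ RTree.posOpen t v₂) ∧
    (RTree.posClose' t v₁ < RTree.posOpen' t v₂ ↔
      (RTree.posOpen t v₁ < RTree.posOpen t v₂ ∧ ¬ (v₁.dropLast <+: v₂))) := by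
  obtain ⟨q, i, rfl⟩ : ∃ q i, v₁ = q ++ [i] :=
    ⟨_, _, (List.dropLast_append_getLast hroot).symm⟩
  rw [RTree.posClose'_append_lt_posOpen'_iff h₁ h₂, RTree.exists_node_between_iff h₁ h₂,
    RTree.posOpen_lt_posOpen_iff h₁ h₂, List.dropLast_concat]
  refine ⟨Iff.rfl, fun ⟨hqw, hnp⟩ => ⟨?_, hnp⟩, fun ⟨hvw, hnp⟩ => ⟨?_, hnp⟩⟩
  · exact (List.append_lt_take_length hqw hnp [i]).trans_le
      (not_lt.1 (List.take_prefix _ _).le)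
  · exact (List.lt_append_cons q i []).trans hvw
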